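/- arXiv:2102.00500 — 3 statements merged into one kernel-verified Lean document; each statement's English description precedes it below -/
import Mathlib

section
/- Let X be a finite nonempty set, P : X → X → ℝ with nonnegative entries, ε > 0, and let c : X → α and c' : X → β be labelings of X such that c is a refinement of c'. With the cluster-exit parameter δ(c) = 2 · max_{x∈X} ∑_{y : c(y) ≠ c(x)} P(x,y), assume δ(c) > 0 and δ(c') > 0, and let a, a' be real numbers. Suppose the closed intervals I = [a, ε/(2δ(c))] and I' = [a', ε/(2δ(c'))] are disjoint, and let t ∈ I and s ∈ I'. Then t < s. (This is the key step of the proposition that, when the MELD data model exhibits hierarchical structure, the number of latent clusters K_t is monotonically non-increasing in the diffusion time t: the finer clustering's interval of ε-separability by diffusion distances occurs strictly earlier in the diffusion process than the coarser clustering's interval.) -/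
/-! Merging clusters can only turn cross-cluster transitions into within-cluster ones, so the
exit mass of the coarser labeling is at most that of the finer one: `δ(c') ≤ δ(c)`. Hence the
coarse interval ends no earlier than the fine one, and two disjoint closed intervals ordered
that way must lie entirely one before the other. -/

open Finset

section ExitMass

variable {X R : Type*} [Fintype X] [AddCommMonoid R]

def clusterExitMass {α : Type*} [DecidableEq α] (P : X → X → R) (c : X → α) (x : X) : R :=
  ∑ y ∈ univ.filter (fun y => c y ≠ c x), P x y

theorem clusterExitMass_le_of_refines [PartialOrder R] [IsOrderedAddMonoid R]
    {α β : Type*} [DecidableEq α] [DecidableEq β] {P : X → X → R} (hP : ∀ x y, 0 ≤ P x y)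
    {c : X → α} {c' : X → β} (href : ∀ x y, c x = c y → c' x = c' y) (x : X) :
    clusterExitMass P c' x ≤ clusterExitMass P c x := by
  refine sum_le_sum_of_subset_of_nonneg (fun y hy => ?_) (fun y _ _ => hP x y)
  simp only [mem_filter, mem_univ, true_and] at hy ⊢
  exact fun h => hy (href y x h)

theorem sup'_clusterExitMass_le_of_refines [LinearOrder R] [IsOrderedAddMonoid R]
    [Nonempty X] {α β : Type*} [DecidableEq α] [DecidableEq β] {P : X → X → R}
    (hP : ∀ x y, 0 ≤ P x y) {c : X → α} {c' : X → β} (href : ∀ x y, c x = c y → c' x = c' y) :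
    univ.sup' univ_nonempty (clusterExitMass P c') ≤
      univ.sup' univ_nonempty (clusterExitMass P c) :=
  sup'_mono_fun fun x _ => clusterExitMass_le_of_refines hP href x

end ExitMass

theorem Set.lt_of_disjoint_Icc_of_le {L : Type*} [LinearOrder L] {a b a' b' t s : L}
    (hdisj : Disjoint (Set.Icc a b) (Set.Icc a' b')) (hb : b ≤ b')
    (ht : t ∈ Set.Icc a b) (hs : s ∈ Set.Icc a' b') : t < s := by
  by_contra! hst
  exact Set.disjoint_left.mp hdisj ht ⟨hs.1.trans hst, ht.2.trans hb⟩

theorem fine_interval_before_coarse_interval_general {X α β : Type*} [Fintype X] [Nonempty X]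
    [DecidableEq α] [DecidableEq β]
    (P : X → X → ℝ) (hP : ∀ x y, 0 ≤ P x y)
    (ε : ℝ) (hε : 0 < ε)
    (c : X → α) (c' : X → β)
    (href : ∀ x y, c x = c y → c' x = c' y)
    (δc δc' : ℝ)
    (hδc : δc = 2 * Finset.univ.sup' Finset.univ_nonempty
        (fun x => ∑ y ∈ Finset.univ.filter (fun y => c y ≠ c x), P x y))
    (hδc' : δc' = 2 * Finset.univ.sup' Finset.univ_nonempty
        (fun x => ∑ y ∈ Finset.univ.filter (fun y => c' y ≠ c' x), P x y))
    (hδc'pos : 0 < δc')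
    (a a' t s : ℝ)
    (hdisj : Disjoint (Set.Icc a (ε / (2 * δc))) (Set.Icc a' (ε / (2 * δc'))))
    (ht : t ∈ Set.Icc a (ε / (2 * δc)))
    (hs : s ∈ Set.Icc a' (ε / (2 * δc'))) :
    t < s := by
  have hδ : δc' ≤ δc := by
    rw [hδc, hδc']
    exact mul_le_mul_of_nonneg_left (sup'_clusterExitMass_le_of_refines hP href) zero_le_two
  have hend : ε / (2 * δc) ≤ ε / (2 * δc') :=
    div_le_div_of_nonneg_left hε.le (by positivity) (by linarith)
  exact Set.lt_of_disjoint_Icc_of_le hdisj hend ht hs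

/-- Key step of the monotonicity proposition for hierarchical MELD structure: the
finer clustering's interval of ε-separability occurs strictly earlier in the
diffusion process than the coarser clustering's interval. -/
theorem fine_interval_before_coarse_interval {X α β : Type*} [Fintype X] [Nonempty X]
    [DecidableEq α] [DecidableEq β]
    (P : X → X → ℝ) (hP : ∀ x y, 0 ≤ P x y)
    (ε : ℝ) (hε : 0 < ε)
    (c : X → α) (c' : X → β)
    (href : ∀ x y, c x = c y → c' x = c' y)
    (δc δc' : ℝ)
    (hδc : δc = 2 * Finset.univ.sup' Finset.univ_nonempty
        (fun x => ∑ y ∈ Finset.univ.filter (fun y => c y ≠ c x), P x y))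
    (hδc' : δc' = 2 * Finset.univ.sup' Finset.univ_nonempty
        (fun x => ∑ y ∈ Finset.univ.filter (fun y => c' y ≠ c' x), P x y))
    (hδcpos : 0 < δc) (hδc'pos : 0 < δc')
    (a a' t s : ℝ)
    (hdisj : Disjoint (Set.Icc a (ε / (2 * δc))) (Set.Icc a' (ε / (2 * δc'))))
    (ht : t ∈ Set.Icc a (ε / (2 * δc)))
    (hs : s ∈ Set.Icc a' (ε / (2 * δc'))) :
    t < s :=
  fine_interval_before_coarse_interval_general P hP ε hε c c' href δc δc' hδc hδc' hδc'pos a a' t s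
    hdisj ht hs
end

section
/- Let n ≥ 1, let P be an n×n real matrix, and let π : Fin n → ℝ satisfy π(u) > 0 for all u and Σ_u π(u) = 1. For t ∈ ℕ, define the relative pointwise distance Δ(t) = max_{i,j} |(Pᵗ)_{i,j} − π(j)| / π(j) and the diffusion distance D_t(x,y) = sqrt( Σ_u ((Pᵗ)_{x,u} − (Pᵗ)_{y,u})² / π(u) ). Then for all x, y, D_t(x,y) ≤ 2·Δ(t). (This is the main estimate in the proof of the near-equilibrium proposition: the diffusion distance between any two points is at most twice the relative pointwise distance of Pᵗ to its stationary distribution.) -/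
open Finset

theorem sqrt_sum_sq_div_le_of_abs_le_mul {ι : Type*} [Fintype ι] {π v : ι → ℝ} {c : ℝ}
    (hπpos : ∀ u, 0 < π u) (hπsum : ∑ u, π u = 1) (hc : 0 ≤ c)
    (hv : ∀ u, |v u| ≤ c * π u) :
    Real.sqrt (∑ u, v u ^ 2 / π u) ≤ c := by
  have hterm : ∀ u, v u ^ 2 / π u ≤ c ^ 2 * π u := fun u => by
    rw [div_le_iff₀ (hπpos u), ← sq_abs]
    calc |v u| ^ 2 ≤ (c * π u) ^ 2 := pow_le_pow_left₀ (abs_nonneg _) (hv u) 2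
      _ = c ^ 2 * π u * π u := by ring
  refine Real.sqrt_le_iff.mpr ⟨hc, ?_⟩
  calc ∑ u, v u ^ 2 / π u ≤ ∑ u, c ^ 2 * π u := sum_le_sum fun u _ => hterm u
    _ = c ^ 2 := by rw [← mul_sum, hπsum, mul_one]

theorem diffusion_distance_le_two_Delta_general {n : ℕ}
    (P : Matrix (Fin n) (Fin n) ℝ)
    (π : Fin n → ℝ) (hπpos : ∀ u, 0 < π u) (hπsum : ∑ u, π u = 1)
    (t : ℕ) (Δ : ℝ)
    (hΔ : IsGreatest {d : ℝ | ∃ i j, d = |(P ^ t) i j - π j| / π j} Δ) :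
    ∀ x y, Real.sqrt (∑ u, ((P ^ t) x u - (P ^ t) y u) ^ 2 / π u) ≤ 2 * Δ := by
  intro x y
  have hΔ_nonneg : 0 ≤ Δ := by
    obtain ⟨i, j, hij⟩ := hΔ.1
    exact hij ▸ div_nonneg (abs_nonneg _) (hπpos j).le
  have hclose : ∀ i j, |(P ^ t) i j - π j| ≤ Δ * π j := fun i j =>
    (div_le_iff₀ (hπpos j)).mp (hΔ.2 ⟨i, j, rfl⟩)
  refine sqrt_sum_sq_div_le_of_abs_le_mul hπpos hπsum (by positivity) fun u => ?_
  calc |(P ^ t) x u - (P ^ t) y u|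
      ≤ |(P ^ t) x u - π u| + |π u - (P ^ t) y u| := abs_sub_le _ _ _
    _ ≤ 2 * Δ * π u := by
      rw [abs_sub_comm (π u)]
      linarith [hclose x u, hclose y u]

/-- Main estimate in the proof of the near-equilibrium proposition: the
diffusion distance between any two points at time t is at most twice the
relative pointwise distance Δ(t) = max_{i,j} |(Pᵗ)_{ij} − π(j)|/π(j) of Pᵗ to
its stationary distribution π. -/
theorem diffusion_distance_le_two_Delta {n : ℕ} (hn : 1 ≤ n)
    (P : Matrix (Fin n) (Fin n) ℝ)
    (π : Fin n → ℝ) (hπpos : ∀ u, 0 < π u) (hπsum : ∑ u, π u = 1)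
    (t : ℕ) (Δ : ℝ)
    (hΔ : IsGreatest {d : ℝ | ∃ i j, d = |(P ^ t) i j - π j| / π j} Δ) :
    ∀ x y, Real.sqrt (∑ u, ((P ^ t) x u - (P ^ t) y u) ^ 2 / π u) ≤ 2 * Δ :=
  diffusion_distance_le_two_Delta_general P π hπpos hπsum t Δ hΔ
end

section
/- Let n ≥ 1, let P be an n×n real matrix, and let π : Fin n → ℝ satisfy π(u) > 0 for all u and Σ_u π(u) = 1; let π_min = min_u π(u). Let λ ∈ (0,1), τ ∈ (0,1), and t ∈ ℕ. Define Δ(t) = max_{i,j} |(Pᵗ)_{i,j} − π(j)| / π(j) and D_t(x,y) = sqrt( Σ_u ((Pᵗ)_{x,u} − (Pᵗ)_{y,u})² / π(u) ). Assume the spectral mixing bound Δ(t) ≤ λᵗ / π_min holds. If t > log(τ·π_min/2)/log(λ), then for all x, y, D_t(x,y) < τ. (Near-equilibrium proposition: once the diffusion time exceeds log_{|λ₂|}(τ·π_min/2), all pairwise diffusion distances drop below the stationarity threshold τ, justifying terminating the M-LUND algorithm's cluster analysis at time β^T.) -/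
/-!
If every row of `Pᵗ` is within relative error `ε = λᵗ / π_min` of `π`, then two rows differ
by at most `2 ε π(u)` in column `u`, so their squared diffusion distance is at most
`(2ε)² Σ π(u) = (2ε)²`. The hypothesis on `t` says exactly that `λᵗ < τ π_min / 2`, i.e. `2ε < τ`.
-/

lemma sq_sub_div_le_of_abs_sub_le_mul {a b p ε : ℝ} (hp : 0 < p)
    (ha : |a - p| ≤ ε * p) (hb : |b - p| ≤ ε * p) :
    (a - b) ^ 2 / p ≤ (2 * ε) ^ 2 * p := by
  have hab : |a - b| ≤ 2 * ε * p := by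
    calc |a - b| = |(a - p) - (b - p)| := by ring_nf
      _ ≤ |a - p| + |b - p| := abs_sub _ _
      _ ≤ 2 * ε * p := by linarith
  have hsq : (a - b) ^ 2 ≤ (2 * ε * p) ^ 2 := by
    rw [← sq_abs]
    exact pow_le_pow_left₀ (abs_nonneg _) hab 2
  rw [div_le_iff₀ hp]
  nlinarith

lemma sqrt_sum_sq_sub_div_le_of_abs_sub_le_mul {ι : Type*} [Fintype ι] {a b w : ι → ℝ} {ε : ℝ}
    (hw : ∀ u, 0 < w u) (hwsum : ∑ u, w u = 1) (hε : 0 ≤ ε)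
    (ha : ∀ u, |a u - w u| ≤ ε * w u) (hb : ∀ u, |b u - w u| ≤ ε * w u) :
    Real.sqrt (∑ u, (a u - b u) ^ 2 / w u) ≤ 2 * ε := by
  have hsum : ∑ u, (a u - b u) ^ 2 / w u ≤ (2 * ε) ^ 2 :=
    calc ∑ u, (a u - b u) ^ 2 / w u ≤ ∑ u, (2 * ε) ^ 2 * w u :=
          Finset.sum_le_sum fun u _ => sq_sub_div_le_of_abs_sub_le_mul (hw u) (ha u) (hb u)
      _ = (2 * ε) ^ 2 := by rw [← Finset.mul_sum, hwsum, mul_one]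
  exact Real.sqrt_le_iff.mpr ⟨by positivity, hsum⟩

theorem diffusion_distance_lt_tau_near_equilibrium_general {n : ℕ}
    (P : Matrix (Fin n) (Fin n) ℝ)
    (π : Fin n → ℝ) (hπpos : ∀ u, 0 < π u) (hπsum : ∑ u, π u = 1)
    (πmin : ℝ) (hπmin : IsLeast {q : ℝ | ∃ u, q = π u} πmin)
    (lam τ : ℝ) (hlam : lam ∈ Set.Ioo (0 : ℝ) 1) (hτ : τ ∈ Set.Ioo (0 : ℝ) 1)
    (t : ℕ) (Δ : ℝ)
    (hΔ : IsGreatest {d : ℝ | ∃ i j, d = |(P ^ t) i j - π j| / π j} Δ)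
    (hmix : Δ ≤ lam ^ t / πmin)
    (ht : (t : ℝ) > Real.log (τ * πmin / 2) / Real.log lam) :
    ∀ x y, Real.sqrt (∑ u, ((P ^ t) x u - (P ^ t) y u) ^ 2 / π u) < τ := by
  intro x y
  obtain ⟨hlam0, hlam1⟩ := hlam
  have hπmin_pos : 0 < πmin := by
    obtain ⟨⟨u, rfl⟩, -⟩ := hπmin
    exact hπpos u
  have hpow : lam ^ t < τ * πmin / 2 := by
    have := (Real.logb_lt_iff_lt_rpow_of_base_lt_one hlam0 hlam1 (by positivity [hτ.1])).mp ht
    exact_mod_cast this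
  have hentry : ∀ i j, |(P ^ t) i j - π j| ≤ lam ^ t / πmin * π j := fun i j =>
    (div_le_iff₀ (hπpos j)).mp ((hΔ.2 ⟨i, j, rfl⟩).trans hmix)
  calc Real.sqrt (∑ u, ((P ^ t) x u - (P ^ t) y u) ^ 2 / π u) ≤ 2 * (lam ^ t / πmin) :=
        sqrt_sum_sq_sub_div_le_of_abs_sub_le_mul hπpos hπsum (by positivity) (hentry x) (hentry y)
    _ < τ := by
        rw [mul_div_assoc', div_lt_iff₀ hπmin_pos]
        linarith

/-- Near-equilibrium proposition: once the diffusion time t exceeds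
log_{|λ₂|}(τ·π_min/2), all pairwise diffusion distances drop below the
stationarity threshold τ. Here `lam` stands for |λ₂|, and the hypothesis
`hmix` is the standard spectral mixing bound Δ(t) ≤ |λ₂|ᵗ/π_min. -/
theorem diffusion_distance_lt_tau_near_equilibrium {n : ℕ} (hn : 1 ≤ n)
    (P : Matrix (Fin n) (Fin n) ℝ)
    (π : Fin n → ℝ) (hπpos : ∀ u, 0 < π u) (hπsum : ∑ u, π u = 1)
    (πmin : ℝ) (hπmin : IsLeast {q : ℝ | ∃ u, q = π u} πmin)
    (lam τ : ℝ) (hlam : lam ∈ Set.Ioo (0 : ℝ) 1) (hτ : τ ∈ Set.Ioo (0 : ℝ) 1)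
    (t : ℕ) (Δ : ℝ)
    (hΔ : IsGreatest {d : ℝ | ∃ i j, d = |(P ^ t) i j - π j| / π j} Δ)
    (hmix : Δ ≤ lam ^ t / πmin)
    (ht : (t : ℝ) > Real.log (τ * πmin / 2) / Real.log lam) :
    ∀ x y, Real.sqrt (∑ u, ((P ^ t) x u - (P ^ t) y u) ^ 2 / π u) < τ :=
  diffusion_distance_lt_tau_near_equilibrium_general P π hπpos hπsum πmin hπmin lam τ hlam hτ t Δ hΔ
    hmix ht
end
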